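/- The group presented by ⟨a, b | aba = bab⟩ is not isomorphic to ℤ. -/

import Mathlib

/-- The free group on two generators. -/
abbrev F : Type := FreeGroup (Fin 2)

/-- The generator `a`. -/
def a : F := FreeGroup.of 0

/-- The generator `b`. -/
def b : F := FreeGroup.of 1

/-- The relator set of `⟨a, b | aba = bab⟩`. -/
def rels : Set F := {a * b * a * (b * a * b)⁻¹}

/-!
Sending `a ↦ (0 1)` and `b ↦ (1 2)` respects the braid relation, so the trefoil group maps onto
the nonabelian group `S₃`; in particular its generators do not commute, whereas `ℤ` is abelian.
-/

theorem braid_relation_transpositions :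
    Equiv.swap (0 : Fin 3) 1 * Equiv.swap 1 2 * Equiv.swap 0 1 =
      Equiv.swap 1 2 * Equiv.swap 0 1 * Equiv.swap 1 2 := by
  decide

def toPerm : PresentedGroup rels →* Equiv.Perm (Fin 3) :=
  PresentedGroup.toGroup (f := ![Equiv.swap 0 1, Equiv.swap 1 2]) <| by
    rintro r rfl
    simp only [a, b, map_mul, map_inv, FreeGroup.lift_apply_of, Matrix.cons_val_zero,
      Matrix.cons_val_one, Matrix.cons_val_fin_one, braid_relation_transpositions, mul_inv_cancel]

theorem not_commute_transpositions :
    ¬ Commute (Equiv.swap (0 : Fin 3) 1) (Equiv.swap 1 2) := by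
  unfold Commute SemiconjBy
  decide

theorem not_commute_generators :
    ¬ Commute (PresentedGroup.of (rels := rels) 0) (PresentedGroup.of 1) := fun h =>
  not_commute_transpositions <| by
    simpa only [toPerm, PresentedGroup.toGroup.of, Matrix.cons_val_zero, Matrix.cons_val_one,
      Matrix.cons_val_fin_one] using h.map toPerm

/-- The group presented by `⟨a, b | aba = bab⟩` is not isomorphic to `ℤ`. -/
theorem trefoil_group_not_iso_int :
    ¬ Nonempty (PresentedGroup rels ≃* Multiplicative ℤ) := by
  rintro ⟨e⟩
  apply not_commute_generators
  simpa using (Commute.all (e (.of 0)) (e (.of 1))).map e.symm
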